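/- arXiv:1802.08170 — 9 statements merged into one kernel-verified Lean document; each statement's English description precedes it below -/
import Mathlib

section
/- Every countable frame is weakly atomic: for every x < y in a countable frame L, there exist u, v with x ≤ u < v ≤ y such that no w satisfies u < w < v. -/
/-!
If `x < y` and no covering pair lies between them, a maximal chain through `x` and `y` is densely
ordered between `x` and `y`, so it contains a copy of `ℚ`. Completeness then turns Dedekind cuts
of `ℚ` into a strictly monotone map `ℝ → L`, which is impossible when `L` is countable.
-/

section Flag

variable {α : Type*} [PartialOrder α]

theorem Flag.exists_mem_between {s : Flag α} {a b w : α} (ha : a ∈ s) (hb : b ∈ s)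
    (haw : a < w) (hwb : w < b) : ∃ c ∈ s, a < c ∧ c < b := by
  by_contra! hgap
  have hw : w ∈ s := Flag.mem_iff_forall_le_or_ge.mpr fun c hc => by
    rcases s.le_or_le hc ha with hca | hac
    · exact Or.inr (hca.trans haw.le)
    rcases s.le_or_le hb hc with hbc | hcb
    · exact Or.inl (hwb.le.trans hbc)
    rcases hac.eq_or_lt with rfl | hac
    · exact Or.inr haw.le
    rcases hcb.eq_or_lt with rfl | hcb
    · exact Or.inl hwb.le
    exact (hgap c hc hac hcb).elim
  exact hgap w hw haw hwb

theorem exists_strictMono_rat_of_forall_not_covBy {x y : α} (hxy : x < y)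
    (hdense : ∀ u v, x ≤ u → v ≤ y → ¬u ⋖ v) : ∃ f : ℚ → α, StrictMono f := by
  classical
  obtain ⟨s, hx, hy⟩ := Flag.exists_mem_mem hxy.le
  let I := Set.Icc (⟨x, hx⟩ : s) ⟨y, hy⟩
  have : DenselyOrdered I := ⟨fun a b hab => by
    obtain ⟨w, haw, hwb⟩ := (not_covBy_iff (show (a : α) < b from hab)).mp <|
      hdense a b a.2.1 b.2.2
    obtain ⟨c, hc, hac, hcb⟩ := Flag.exists_mem_between a.1.2 b.1.2 haw hwb
    exact ⟨⟨⟨c, hc⟩, a.2.1.trans hac.le, hcb.le.trans b.2.2⟩, hac, hcb⟩⟩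
  have : Nontrivial I :=
    ⟨⟨⟨_, Set.left_mem_Icc.mpr hxy.le⟩, ⟨_, Set.right_mem_Icc.mpr hxy.le⟩,
      fun h => hxy.ne (congrArg (fun c : I => (c : α)) h)⟩⟩
  obtain ⟨e⟩ := Order.embedding_from_countable_to_dense (α := ℚ) (β := I)
  exact ⟨fun q => ((e q : s) : α), fun p q hpq => e.strictMono hpq⟩

end Flag

/-- Extends `f` to `ℝ` by Dedekind cuts: `r ↦ ⨆ {f q | q < r}`. -/
theorem StrictMono.exists_strictMono_real {L : Type*} [CompleteSemilatticeSup L] {f : ℚ → L}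
    (hf : StrictMono f) : ∃ g : ℝ → L, StrictMono g := by
  refine ⟨fun r => sSup (f '' {q : ℚ | (q : ℝ) < r}), fun r r' hrr' => ?_⟩
  obtain ⟨p, hrp, hpr'⟩ := exists_rat_btwn hrr'
  obtain ⟨q, hpq, hqr'⟩ := exists_rat_btwn hpr'
  calc sSup (f '' {q : ℚ | (q : ℝ) < r})
      ≤ f p := sSup_le <| by
        rintro _ ⟨t, ht, rfl⟩
        exact (hf (by exact_mod_cast ht.trans hrp)).le
    _ < f q := hf (by exact_mod_cast hpq)
    _ ≤ sSup (f '' {q : ℚ | (q : ℝ) < r'}) := le_sSup ⟨q, hqr', rfl⟩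

theorem stmt_1_general {L : Type*} [CompleteLattice L] [Countable L] :
    ∀ x y : L, x < y → ∃ u v : L, x ≤ u ∧ u < v ∧ v ≤ y ∧ ¬∃ w, u < w ∧ w < v := by
  intro x y hxy
  by_contra! hdense
  obtain ⟨f, hf⟩ := exists_strictMono_rat_of_forall_not_covBy hxy fun u v hu hv huv =>
    let ⟨w, huw, hwv⟩ := hdense u v hu huv.lt hv
    huv.2 huw hwv
  obtain ⟨g, hg⟩ := hf.exists_strictMono_real
  exact not_countable hg.injective.countable

/-- Every countable frame is weakly atomic. -/
theorem stmt_1 {L : Type*} [CompleteLattice L] [Countable L]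
    (hframe : ∀ (x : L) (Y : Set L), x ⊓ sSup Y = ⨆ y ∈ Y, x ⊓ y) :
    ∀ x y : L, x < y → ∃ u v : L, x ≤ u ∧ u < v ∧ v ≤ y ∧ ¬∃ w, u < w ∧ w < v :=
  stmt_1_general
end

section
/- Every countable frame is spatial: for all x < y in a countable frame L there exists a prime element p with x ≤ p and y ≰ p. -/
/-!
If some `c ∈ (x, y]` admits no two elements `a, b ∈ (x, c]` with `a ⊓ b ≤ x`, then the relative
pseudocomplement `c ⇨ x` is prime, lies above `x` and not above `y`. Otherwise `(x, y]` can be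
split again and again, which produces a sequence `E n > x` with `E m ⊓ E n ≤ x` for `m ≠ n`. By the
infinite distributive law, `s ↦ x ⊔ ⨆ n ∈ s, E n` then embeds `Set ℕ` into the frame, which is
therefore uncountable.
-/

def SplitsOver {α : Type*} [SemilatticeInf α] (x c : α) : Prop :=
  ∃ a ∈ Set.Ioc x c, ∃ b ∈ Set.Ioc x c, a ⊓ b ≤ x

section HeytingAlgebra

variable {α : Type*} [HeytingAlgebra α] {x c : α}

lemma le_himp_or_inf_sup_mem_Ioc (hxc : x < c) (a : α) :
    a ≤ c ⇨ x ∨ a ⊓ c ⊔ x ∈ Set.Ioc x c := by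
  rw [le_himp_iff, ← sup_eq_right (a := a ⊓ c)]
  exact (le_sup_right.eq_or_lt).imp Eq.symm fun h => ⟨h, sup_le inf_le_right hxc.le⟩

lemma infPrime_himp_of_not_splitsOver (hxc : x < c) (hc : ¬SplitsOver x c) :
    InfPrime (c ⇨ x) := by
  refine ⟨fun hmax => hxc.not_ge (himp_eq_top_iff.mp hmax.eq_top), fun a b hab => ?_⟩
  by_contra! ⟨ha, hb⟩
  refine hc ⟨_, (le_himp_or_inf_sup_mem_Ioc hxc a).resolve_left ha,
    _, (le_himp_or_inf_sup_mem_Ioc hxc b).resolve_left hb, ?_⟩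
  rw [← sup_inf_right, inf_inf_inf_comm, inf_idem]
  exact sup_le (le_himp_iff.mp hab) le_rfl

lemma exists_infPrime_of_not_splitsOver {y : α} (hxc : x < c) (hcy : c ≤ y)
    (hc : ¬SplitsOver x c) : ∃ p, InfPrime p ∧ x ≤ p ∧ ¬y ≤ p := by
  refine ⟨c ⇨ x, infPrime_himp_of_not_splitsOver hxc hc, le_himp, fun hy => hxc.not_ge ?_⟩
  simpa using le_himp_iff.mp (hcy.trans hy)

end HeytingAlgebra

lemma exists_seq_pairwise_inf_le_of_forall_splitsOver {α : Type*} [SemilatticeInf α] {x y : α}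
    (hxy : x < y) (hsplit : ∀ c ∈ Set.Ioc x y, SplitsOver x c) :
    ∃ E : ℕ → α, (∀ n, x < E n) ∧ Pairwise fun m n => E m ⊓ E n ≤ x := by
  have step (c : Set.Ioc x y) :
      ∃ a : Set.Ioc x y, ∃ b ∈ Set.Ioc x c.1, a.1 ≤ c ∧ a.1 ⊓ b ≤ x := by
    obtain ⟨a, ⟨hxa, hac⟩, b, hb, hab⟩ := hsplit c c.2
    exact ⟨⟨a, hxa, hac.trans c.2.2⟩, b, hb, hac, hab⟩
  choose next b hb hnext hdisj using step
  set A : ℕ → Set.Ioc x y := fun n => next^[n] ⟨y, hxy, le_rfl⟩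
  have hA_succ (n : ℕ) : A (n + 1) = next (A n) := Function.iterate_succ_apply' ..
  have hA : Antitone fun n => (A n).1 :=
    antitone_nat_of_succ_le fun n => by simpa only [hA_succ] using hnext (A n)
  have hlt {m n : ℕ} (hmn : m < n) : b (A m) ⊓ b (A n) ≤ x :=
    calc b (A m) ⊓ b (A n) ≤ b (A m) ⊓ next (A m) := by
          rw [← hA_succ]; exact inf_le_inf_left _ ((hb _).2.trans (hA hmn))
      _ ≤ x := inf_comm (b (A m)) _ ▸ hdisj _
  refine ⟨fun n => b (A n), fun n => (hb _).1, fun m n hmn => ?_⟩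
  rcases hmn.lt_or_gt with h | h
  · exact hlt h
  · exact inf_comm (b (A n)) _ ▸ hlt h

section Frame

open Order

variable {α ι : Type*} [Frame α] {x : α} {E : ι → α}

lemma le_sup_biSup_iff_mem (hE : ∀ i, x < E i) (hdisj : Pairwise fun i j => E i ⊓ E j ≤ x)
    (s : Set ι) (i : ι) : E i ≤ x ⊔ ⨆ j ∈ s, E j ↔ i ∈ s := by
  refine ⟨fun hi => ?_, fun hi => le_sup_of_le_right (le_iSup₂_of_le i hi le_rfl)⟩
  by_contra hs
  have : E i ⊓ (x ⊔ ⨆ j ∈ s, E j) ≤ x := by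
    rw [inf_sup_left, inf_iSup₂_eq]
    exact sup_le inf_le_right (iSup₂_le fun j hj => hdisj (ne_of_mem_of_not_mem hj hs).symm)
  exact (hE i).not_ge (inf_eq_left.mpr hi ▸ this)

lemma injective_sup_biSup (hE : ∀ i, x < E i) (hdisj : Pairwise fun i j => E i ⊓ E j ≤ x) :
    Function.Injective fun s : Set ι => x ⊔ ⨆ j ∈ s, E j := fun s t hst =>
  Set.ext fun i => by
    rw [← le_sup_biSup_iff_mem hE hdisj, ← le_sup_biSup_iff_mem hE hdisj t]
    exact Iff.of_eq (congrArg (E i ≤ ·) hst)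

lemma exists_not_splitsOver [Countable α] {y : α} (hxy : x < y) :
    ∃ c ∈ Set.Ioc x y, ¬SplitsOver x c := by
  by_contra! hsplit
  obtain ⟨E, hE, hdisj⟩ := exists_seq_pairwise_inf_le_of_forall_splitsOver hxy hsplit
  have : Countable (Set ℕ) := (injective_sup_biSup hE hdisj).countable
  obtain ⟨f, hf⟩ := Countable.exists_injective_nat (Set ℕ)
  exact Function.cantor_injective f hf

end Frame

/-- Every countable frame is spatial: for x < y there is a prime p
with x ≤ p and y ≰ p. -/
theorem stmt_2 {L : Type*} [CompleteLattice L] [Countable L]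
    (hframe : ∀ (x : L) (Y : Set L), x ⊓ sSup Y = ⨆ y ∈ Y, x ⊓ y) :
    ∀ x y : L, x < y →
      ∃ p : L, (p ≠ ⊤ ∧ ∀ a b : L, a ⊓ b ≤ p → a ≤ p ∨ b ≤ p) ∧ x ≤ p ∧ ¬ y ≤ p := by
  intro x y hxy
  let _ : Order.Frame L := .ofMinimalAxioms ⟨fun a s => (hframe a s).le⟩
  obtain ⟨c, ⟨hxc, hcy⟩, hc⟩ := exists_not_splitsOver hxy
  obtain ⟨p, hp, hxp, hyp⟩ := exists_infPrime_of_not_splitsOver hxc hcy hc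
  exact ⟨p, ⟨hp.ne_top, fun a b => hp.inf_le.mp⟩, hxp, hyp⟩
end

section
/- A countable complete lattice that is both a frame and a coframe is superalgebraic: for all x < y there exists a supercompact element q with q ≤ y and q ≰ x. -/
/-!
If `u ⋖ w` in a complete lattice that is both a frame and a coframe, the coHeyting difference
`w \ u` is supercompact: when `w \ u ≤ sSup S`, the frame law splits `w ⊓ sSup S` into the
`w ⊓ s`, and by the covering each of these either lies below `u` or joins `u` up to `w`, which
means `w \ u ≤ s`. Hence if no supercompact element lies below `y` but not below `x`, the interval
`[x, y]` has no covering pairs, i.e. it is a densely ordered complete lattice. Choosing nested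
disjoint subintervals along the branches of the binary tree then embeds the Cantor space
`ℕ → Bool` into `[x, y]` (strictly monotonically for the lexicographic order), so `L` is
uncountable.
-/

theorem sdiff_le_right_iff {α : Type*} [GeneralizedCoheytingAlgebra α] {a b : α} :
    a \ b ≤ b ↔ a ≤ b := by
  rw [sdiff_le_iff, sup_idem]

def IsSupercompact {L : Type*} [CompleteLattice L] (q : L) : Prop :=
  ∀ S : Set L, q ≤ sSup S → ∃ s ∈ S, q ≤ s

theorem CovBy.isSupercompact_sdiff {L : Type*} [CompleteDistribLattice L] {u w : L}
    (huw : u ⋖ w) : IsSupercompact (w \ u) := by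
  intro S hS
  by_contra! hnot
  have hsmall : ∀ s ∈ S, w ⊓ s ≤ u := fun s hs => by
    rcases huw.eq_or_eq le_sup_left (sup_le huw.le inf_le_left) with h | h
    · exact h ▸ le_sup_right
    · exact absurd (sdiff_le_iff.2 (h.ge.trans (sup_le_sup_left inf_le_right u))) (hnot s hs)
  have : w \ u ≤ u := (le_inf sdiff_le hS).trans (inf_sSup_eq.trans_le (iSup₂_le hsmall))
  exact huw.lt.not_ge (sdiff_le_right_iff.1 this)

abbrev ProperInterval (L : Type*) [Preorder L] : Type _ := {p : L × L // p.1 < p.2}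

section CantorScheme

variable {L : Type*} [CompleteLattice L] [DenselyOrdered L]

noncomputable def splitInterval (I : ProperInterval L) (b : Bool) : ProperInterval L :=
  have hz₂ := exists_between I.2
  have hz₁ := exists_between hz₂.choose_spec.1
  if b then ⟨(hz₂.choose, I.1.2), hz₂.choose_spec.2⟩
  else ⟨(I.1.1, hz₁.choose), hz₁.choose_spec.1⟩

theorem fst_le_splitInterval_fst (I : ProperInterval L) (b : Bool) :
    I.1.1 ≤ (splitInterval I b).1.1 := by
  cases b
  · exact le_rfl
  · exact (exists_between I.2).choose_spec.1.le

theorem splitInterval_snd_le_snd (I : ProperInterval L) (b : Bool) :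
    (splitInterval I b).1.2 ≤ I.1.2 := by
  cases b
  · exact ((exists_between (exists_between I.2).choose_spec.1).choose_spec.2.trans
      (exists_between I.2).choose_spec.2).le
  · exact le_rfl

theorem splitInterval_false_snd_lt_true_fst (I : ProperInterval L) :
    (splitInterval I false).1.2 < (splitInterval I true).1.1 :=
  (exists_between (exists_between I.2).choose_spec.1).choose_spec.2

variable [Nontrivial L]

noncomputable def cantorInterval (α : ℕ → Bool) : ℕ → ProperInterval L
  | 0 => ⟨(⊥, ⊤), bot_lt_top⟩
  | n + 1 => splitInterval (cantorInterval α n) (α n)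

noncomputable def cantorPoint (α : ℕ → Bool) : L := ⨆ n, (cantorInterval α n).1.1

theorem cantorInterval_congr {α β : ℕ → Bool} {n : ℕ} (h : ∀ j < n, α j = β j) :
    (cantorInterval α n : ProperInterval L) = cantorInterval β n := by
  induction n with
  | zero => rfl
  | succ n ih =>
    simp only [cantorInterval, ih fun j hj => h j (hj.trans n.lt_succ_self), h n n.lt_succ_self]

theorem monotone_cantorInterval_fst (α : ℕ → Bool) :
    Monotone fun n => ((cantorInterval α n).1.1 : L) :=
  monotone_nat_of_le_succ fun _ => fst_le_splitInterval_fst _ _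

theorem antitone_cantorInterval_snd (α : ℕ → Bool) :
    Antitone fun n => ((cantorInterval α n).1.2 : L) :=
  antitone_nat_of_succ_le fun _ => splitInterval_snd_le_snd _ _

theorem fst_le_cantorPoint (α : ℕ → Bool) (n : ℕ) :
    (cantorInterval α n).1.1 ≤ (cantorPoint α : L) :=
  le_iSup (fun n => (cantorInterval α n).1.1) n

theorem cantorPoint_le_snd (α : ℕ → Bool) (n : ℕ) :
    (cantorPoint α : L) ≤ (cantorInterval α n).1.2 :=
  iSup_le fun m => calc
    ((cantorInterval α m).1.1 : L) ≤ (cantorInterval α (max m n)).1.1 :=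
      monotone_cantorInterval_fst α (le_max_left m n)
    _ ≤ (cantorInterval α (max m n)).1.2 := (cantorInterval α (max m n)).2.le
    _ ≤ (cantorInterval α n).1.2 := antitone_cantorInterval_snd α (le_max_right m n)

theorem strictMono_cantorPoint_ofLex :
    StrictMono fun α : Lex (ℕ → Bool) => (cantorPoint (ofLex α) : L) := by
  rintro α β ⟨i, hagree, hi⟩
  obtain ⟨hα, hβ⟩ := Bool.lt_iff.1 hi
  have hsplit : (cantorInterval (ofLex α) i : ProperInterval L) = cantorInterval (ofLex β) i :=
    cantorInterval_congr hagree
  calc (cantorPoint (ofLex α) : L)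
      ≤ (cantorInterval (ofLex α) (i + 1)).1.2 := cantorPoint_le_snd _ _
    _ = (splitInterval (cantorInterval (ofLex β) i) false).1.2 := by
      simp only [cantorInterval, hsplit, Pi.ofLex_apply, hα]
    _ < (splitInterval (cantorInterval (ofLex β) i) true).1.1 :=
      splitInterval_false_snd_lt_true_fst _
    _ = (cantorInterval (ofLex β) (i + 1)).1.1 := by
      simp only [cantorInterval, Pi.ofLex_apply, hβ]
    _ ≤ cantorPoint (ofLex β) := fst_le_cantorPoint _ _

theorem CompleteLattice.uncountable_of_denselyOrdered : Uncountable L := by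
  refine ⟨fun hL => ?_⟩
  have hinj : Function.Injective (cantorPoint : (ℕ → Bool) → L) :=
    strictMono_cantorPoint_ofLex.injective
  have hcantor : ¬ Countable (ℕ → Bool) := by
    rw [← Cardinal.mk_le_aleph0_iff]
    simp [Cardinal.aleph0_lt_continuum]
  exact hcantor hinj.countable

end CantorScheme

theorem exists_isSupercompact_le_not_le {L : Type*} [CompleteDistribLattice L] [Countable L]
    {x y : L} (hxy : x < y) : ∃ q, IsSupercompact q ∧ q ≤ y ∧ ¬ q ≤ x := by
  by_contra! h
  have : Fact (x ≤ y) := ⟨hxy.le⟩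
  have : Nontrivial (Set.Icc x y) :=
    nontrivial_of_lt ⟨x, Set.left_mem_Icc.2 hxy.le⟩ ⟨y, Set.right_mem_Icc.2 hxy.le⟩ hxy
  have : DenselyOrdered (Set.Icc x y) := ⟨fun u w (huw : (u : L) < w) => by
    have hnot : ¬ (u : L) ⋖ w := fun hcov => hcov.lt.not_ge <| sdiff_le_right_iff.1 <|
      (h _ hcov.isSupercompact_sdiff (sdiff_le.trans w.2.2)).trans u.2.1
    obtain ⟨z, huz, hzw⟩ := (not_covBy_iff huw).1 hnot
    exact ⟨⟨z, u.2.1.trans huz.le, hzw.le.trans w.2.2⟩, huz, hzw⟩⟩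
  exact (CompleteLattice.uncountable_of_denselyOrdered (L := Set.Icc x y)).not_countable
    inferInstance

/-- A countable complete lattice that is both a frame and a coframe
is superalgebraic: for x < y there is a supercompact q with q ≤ y and q ≰ x. -/
theorem stmt_3 {L : Type*} [CompleteLattice L] [Countable L]
    (hframe : ∀ (x : L) (Y : Set L), x ⊓ sSup Y = ⨆ y ∈ Y, x ⊓ y)
    (hcoframe : ∀ (x : L) (Y : Set L), x ⊔ sInf Y = ⨅ y ∈ Y, x ⊔ y) :
    ∀ x y : L, x < y →
      ∃ q : L, (∀ S : Set L, q ≤ sSup S → ∃ s ∈ S, q ≤ s) ∧ q ≤ y ∧ ¬ q ≤ x := by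
  let _ : CompleteDistribLattice L := .ofMinimalAxioms
    { inf_sSup_le_iSup_inf := fun a s => (hframe a s).le
      iInf_sup_le_sup_sInf := fun a s => (hcoframe a s).ge }
  exact fun x y hxy => exists_isSupercompact_le_not_le hxy
end

section
/- A topological space is a web space (each point has a neighborhood base of webs around it) if and only if its lattice of open sets is a coframe. -/
/-!
Lower bounds propagate membership in open sets upwards. Hence a web `W` around `x ∉ U`
with `W ⊆ U ∪ V` (`U`, `V` open) lies in `V`: a common lower bound of `x` and `y ∈ W`
cannot lie in `U`, so it lies in `V`, and then so does `y`. With neighbourhoods that are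
webs this gives `U ⊔ ⨅ Y ≥ ⨅ (U ⊔ V)`.

Conversely, for `x ∈ U` open, apply the coframe law to `(closure {x})ᶜ` and the open sets
`(closure {y})ᶜ`, `y ∈ U` outside the largest web around `x` in `U`: `U` lies below every
`(closure {x})ᶜ ⊔ (closure {y})ᶜ`, so `x` lies in the open set `⨅ (closure {y})ᶜ`, whose
points in `U` all belong to that web.
-/

/-- The specialization preorder of the paper: x ≤ y iff every open set
containing x contains y (equivalently x ∈ closure {y}). -/
def sle {X : Type*} [TopologicalSpace X] (x y : X) : Prop :=
  ∀ U : Set X, IsOpen U → x ∈ U → y ∈ U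

open TopologicalSpace Set Filter Topology

section

variable {X : Type*} [TopologicalSpace X]

lemma sle_refl (x : X) : sle x x := fun _ _ hx => hx

lemma sle_iff_mem_closure {x y : X} : sle x y ↔ x ∈ closure {y} := by
  rw [← specializes_iff_mem_closure, specializes_iff_forall_open]
  rfl

def IsWebAround (x : X) (W : Set X) : Prop :=
  x ∈ W ∧ ∀ y ∈ W, ∃ w ∈ W, sle w x ∧ sle w y

variable (X) in
def IsWebSpace : Prop :=
  ∀ x : X, (𝓝 x).HasBasis (fun W => W ∈ 𝓝 x ∧ IsWebAround x W) id

lemma isWebSpace_iff_forall_isOpen : IsWebSpace X ↔ ∀ (x : X) (U : Set X), IsOpen U → x ∈ U →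
    ∃ W V : Set X, IsOpen V ∧ x ∈ V ∧ V ⊆ W ∧ W ⊆ U ∧ IsWebAround x W := by
  refine forall_congr' fun x => ?_
  rw [hasBasis_self]
  constructor
  · intro h U hU hxU
    obtain ⟨W, hW, hWweb, hWU⟩ := h U (hU.mem_nhds hxU)
    obtain ⟨V, hVW, hV, hxV⟩ := mem_nhds_iff.1 hW
    exact ⟨W, V, hV, hxV, hVW, hWU, hWweb⟩
  · intro h t ht
    obtain ⟨U, hUt, hU, hxU⟩ := mem_nhds_iff.1 ht
    obtain ⟨W, V, hV, hxV, hVW, hWU, hWweb⟩ := h U hU hxU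
    exact ⟨W, mem_of_superset (hV.mem_nhds hxV) hVW, hWweb, hWU.trans hUt⟩

lemma IsWebAround.subset_of_subset_union {x : X} {W U V : Set X} (hW : IsWebAround x W)
    (hU : IsOpen U) (hV : IsOpen V) (hWUV : W ⊆ U ∪ V) (hxU : x ∉ U) : W ⊆ V := by
  intro y hy
  obtain ⟨w, hwW, hwx, hwy⟩ := hW.2 y hy
  rcases hWUV hwW with hwU | hwV
  · exact absurd (hwx U hU hwU) hxU
  · exact hwy V hV hwV

theorem IsWebSpace.sup_sInf_eq (h : IsWebSpace X) (U : Opens X) (Y : Set (Opens X)) :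
    U ⊔ sInf Y = ⨅ V ∈ Y, U ⊔ V := by
  refine le_antisymm (le_iInf₂ fun V hV => sup_le_sup_left (sInf_le hV) U) fun x hx => ?_
  by_cases hxU : x ∈ U
  · exact Opens.mem_sup.2 (Or.inl hxU)
  obtain ⟨W, ⟨hWx, hW⟩, hWsub⟩ := (h x).mem_iff.1 ((⨅ V ∈ Y, U ⊔ V).isOpen.mem_nhds hx)
  have hWY : Opens.interior W ≤ sInf Y := le_sInf fun V hV =>
    interior_subset.trans <| hW.subset_of_subset_union U.isOpen V.isOpen
      (hWsub.trans (iInf₂_le V hV : _ ≤ U ⊔ V)) hxU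
  exact Opens.mem_sup.2 (Or.inr (hWY (mem_interior_iff_mem_nhds.2 hWx)))

/-- The largest web around `x` inside `U` (when `x ∈ U`). -/
def webWithin (x : X) (U : Set X) : Set X :=
  {y ∈ U | ∃ w ∈ U, sle w x ∧ sle w y}

lemma isWebAround_webWithin {x : X} {U : Set X} (hx : x ∈ U) : IsWebAround x (webWithin x U) := by
  refine ⟨⟨hx, x, hx, sle_refl x, sle_refl x⟩, ?_⟩
  rintro y ⟨-, w, hwU, hwx, hwy⟩
  exact ⟨w, ⟨hwU, w, hwU, hwx, sle_refl w⟩, hwx, hwy⟩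

lemma webWithin_mem_nhds
    (hcof : ∀ (U : Opens X) (Y : Set (Opens X)), U ⊔ sInf Y = ⨅ V ∈ Y, U ⊔ V)
    {x : X} {U : Set X} (hU : IsOpen U) (hx : x ∈ U) : webWithin x U ∈ 𝓝 x := by
  set Y : Set (Opens X) := (fun y => (Closeds.closure {y}).compl) '' (U \ webWithin x U)
  have hU_le : (⟨U, hU⟩ : Opens X) ≤ ⨅ V ∈ Y, (Closeds.closure {x}).compl ⊔ V := by
    refine le_iInf₂ ?_
    rintro _ ⟨y, ⟨hyU, hyW⟩, rfl⟩ z hzU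
    by_contra hz
    obtain ⟨hzx, hzy⟩ := not_or.1 (Opens.mem_sup.not.1 hz)
    exact hyW ⟨hyU, z, hzU, sle_iff_mem_closure.2 (not_not.1 hzx),
      sle_iff_mem_closure.2 (not_not.1 hzy)⟩
  have hx_inf : x ∈ sInf Y := by
    have := hU_le hx
    rw [← hcof] at this
    exact (Opens.mem_sup.1 this).resolve_left (not_not.2 (subset_closure rfl))
  refine mem_of_superset (inter_mem ((sInf Y).isOpen.mem_nhds hx_inf) (hU.mem_nhds hx)) ?_
  rintro z ⟨hzY, hzU⟩
  by_contra hzW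
  exact (sInf_le (⟨z, ⟨hzU, hzW⟩, rfl⟩ : _ ∈ Y) : sInf Y ≤ _) hzY (subset_closure rfl)

theorem isWebSpace_of_sup_sInf_eq
    (hcof : ∀ (U : Opens X) (Y : Set (Opens X)), U ⊔ sInf Y = ⨅ V ∈ Y, U ⊔ V) :
    IsWebSpace X := fun x => hasBasis_self.2 fun t ht => by
  obtain ⟨U, hUt, hU, hxU⟩ := mem_nhds_iff.1 ht
  exact ⟨webWithin x U, webWithin_mem_nhds hcof hU hxU, isWebAround_webWithin hxU,
    (sep_subset _ _).trans hUt⟩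

end

/-- A space is a web space iff its lattice of open sets is a coframe. -/
theorem stmt_4 {X : Type*} [TopologicalSpace X] :
    (∀ (x : X) (U : Set X), IsOpen U → x ∈ U →
      ∃ W V : Set X, IsOpen V ∧ x ∈ V ∧ V ⊆ W ∧ W ⊆ U ∧ x ∈ W ∧
        ∀ y ∈ W, ∃ w ∈ W, sle w x ∧ sle w y) ↔
    (∀ (U : TopologicalSpace.Opens X) (Y : Set (TopologicalSpace.Opens X)),
      U ⊔ sInf Y = ⨅ V ∈ Y, U ⊔ V) := by
  exact isWebSpace_iff_forall_isOpen.symm.trans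
    ⟨IsWebSpace.sup_sInf_eq, isWebSpace_of_sup_sInf_eq⟩
end

section
/- A topological space is a C-space (every point has a neighborhood base of cores) if and only if its interior operator preserves arbitrary unions of upper sets: for every family (Y_i) of upper sets with respect to the specialization preorder, int(⋃Y_i) = ⋃ int(Y_i). -/
/-- The core of a point: the saturation ↑x of the singleton {x}. -/
def core {X : Type*} [TopologicalSpace X] (x : X) : Set X := {y | sle x y}

/-!
Proof idea: if every point has a neighbourhood base of cores, a point of `int (⋃ Yᵢ)` has a core
`↑u ⊆ ⋃ Yᵢ` around it; `u` lies in some `Yᵢ`, which being an upper set contains `↑u`, so the point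
lies in `int Yᵢ`. Conversely an open set `U` is the union of the upper sets `↑u`, `u ∈ U`, so
`U = int U = ⋃ int ↑u` and every `x ∈ U` lies in the interior of some core `↑u ⊆ U`.
-/

namespace Specialization

variable {X : Type*} [TopologicalSpace X]

def IsUpper (Y : Set X) : Prop := ∀ x ∈ Y, ∀ y, sle x y → y ∈ Y

def IsCSpace (X : Type*) [TopologicalSpace X] : Prop :=
  ∀ (x : X) (U : Set X), IsOpen U → x ∈ U → ∃ u : X, x ∈ interior (core u) ∧ core u ⊆ U

theorem sle_refl (x : X) : sle x x := fun _ _ hx => hx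

theorem sle_trans {x y z : X} (hxy : sle x y) (hyz : sle y z) : sle x z :=
  fun U hU hx => hyz U hU (hxy U hU hx)

theorem mem_core_self (x : X) : x ∈ core x := sle_refl x

theorem isUpper_core (u : X) : IsUpper (core u) := fun _ hx _ hy => sle_trans hx hy

theorem IsUpper.core_subset {Y : Set X} (hY : IsUpper Y) {u : X} (hu : u ∈ Y) : core u ⊆ Y :=
  fun y hy => hY u hu y hy

theorem core_subset_of_isOpen {U : Set X} (hU : IsOpen U) {u : X} (hu : u ∈ U) : core u ⊆ U :=
  fun _ hy => hy U hU hu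

theorem sUnion_image_core_of_isOpen {U : Set X} (hU : IsOpen U) : ⋃₀ (core '' U) = U := by
  apply Set.Subset.antisymm
  · rintro y ⟨_, ⟨u, hu, rfl⟩, hy⟩
    exact core_subset_of_isOpen hU hu hy
  · exact fun u hu => ⟨core u, Set.mem_image_of_mem core hu, mem_core_self u⟩

theorem IsCSpace.interior_sUnion (hC : IsCSpace X) {𝒴 : Set (Set X)} (h𝒴 : ∀ Y ∈ 𝒴, IsUpper Y) :
    interior (⋃₀ 𝒴) = ⋃ Y ∈ 𝒴, interior Y := by
  refine Set.Subset.antisymm (fun x hx => ?_)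
    (Set.iUnion₂_subset fun Y hY => interior_mono (Set.subset_sUnion_of_mem hY))
  obtain ⟨u, hxu, hu⟩ := hC x _ isOpen_interior hx
  obtain ⟨Y, hY, huY⟩ := interior_subset (hu (mem_core_self u))
  exact Set.mem_iUnion₂.2 ⟨Y, hY, interior_mono ((h𝒴 Y hY).core_subset huY) hxu⟩

theorem isCSpace_of_interior_sUnion
    (h : ∀ 𝒴 : Set (Set X), (∀ Y ∈ 𝒴, IsUpper Y) → interior (⋃₀ 𝒴) = ⋃ Y ∈ 𝒴, interior Y) :
    IsCSpace X := by
  intro x U hU hx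
  have hcover := h (core '' U) (Set.forall_mem_image.2 fun u _ => isUpper_core u)
  rw [sUnion_image_core_of_isOpen hU, hU.interior_eq, Set.biUnion_image] at hcover
  obtain ⟨u, hu, hxu⟩ := Set.mem_iUnion₂.1 (hcover ▸ hx)
  exact ⟨u, hxu, core_subset_of_isOpen hU hu⟩

end Specialization

/-- A space is a C-space iff its interior operator preserves
arbitrary unions of upper sets. -/
theorem stmt_6 {X : Type*} [TopologicalSpace X] :
    (∀ (x : X) (U : Set X), IsOpen U → x ∈ U →
      ∃ u : X, x ∈ interior (core u) ∧ core u ⊆ U) ↔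
    (∀ 𝒴 : Set (Set X), (∀ Y ∈ 𝒴, ∀ x ∈ Y, ∀ y, sle x y → y ∈ Y) →
      interior (⋃₀ 𝒴) = ⋃ Y ∈ 𝒴, interior Y) :=
  ⟨fun hC _ h𝒴 => Specialization.IsCSpace.interior_sUnion hC h𝒴,
    Specialization.isCSpace_of_interior_sUnion⟩
end

section
/- For a complete Boolean algebra L, the weak upper space Υ L is a C-space (every point has a neighborhood base of cores) if and only if L is atomic. -/
/-- The weak upper topology of a (quasi-)ordered set: generated by the
complements of principal ideals. -/
def upTop (L : Type*) [LE L] : TopologicalSpace L :=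
  TopologicalSpace.generateFrom {U : Set L | ∃ y : L, U = {x | ¬ x ≤ y}}

/-- The core of a point w.r.t. a topology: saturation of the singleton. -/
def coreT {L : Type*} (t : TopologicalSpace L) (u : L) : Set L :=
  {y | ∀ O : Set L, t.IsOpen O → u ∈ O → y ∈ O}

/-!
In the upper topology of a Boolean algebra the core of `u` is `Ici u`, and for an atom `a` the core
`Ici a = (Iic aᶜ)ᶜ` is open. If the algebra is atomic, a basic neighbourhood
`{z | z ≰ y₁, …, z ≰ yₙ}` of `x` contains the open core of `a₁ ⊔ ⋯ ⊔ aₙ` for atoms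
`aᵢ ≤ x ⊓ yᵢᶜ`. Conversely, if `Ici u` with `u ≠ ⊥` contains such a basic open set, then testing
`z = bᶜ` shows that every nonzero `b ≤ u` lies above one of the finitely many nonzero `yᵢᶜ`, and a
minimal one of those is an atom below `u`.
-/

open Set Topology TopologicalSpace

lemma upTop_eq_upper (L : Type*) [Preorder L] : upTop L = Topology.upper L := by
  refine congrArg generateFrom (Set.ext fun U => ?_)
  constructor <;> rintro ⟨y, rfl⟩ <;> exact ⟨y, rfl⟩

lemma Minimal.isAtom_of_forall_exists_le {α : Type*} [PartialOrder α] [OrderBot α]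
    {S : Set α} {m : α} (hm : Minimal (· ∈ S) m) (hS : ⊥ ∉ S)
    (hdom : ∀ b < m, b ≠ ⊥ → ∃ c ∈ S, c ≤ b) : IsAtom m := by
  refine ⟨fun h => hS (h ▸ hm.prop), fun d hdm => ?_⟩
  by_contra hd
  obtain ⟨c, hcS, hcd⟩ := hdom d hdm hd
  exact hdm.not_ge ((hm.le_of_le hcS (hcd.trans hdm.le)).trans hcd)

lemma exists_isAtom_le_of_finite {α : Type*} [PartialOrder α] [OrderBot α]
    {S : Set α} (hS : S.Finite) (hS_bot : ⊥ ∉ S) {u : α} (hu : u ≠ ⊥)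
    (hdom : ∀ b ≤ u, b ≠ ⊥ → ∃ c ∈ S, c ≤ b) : ∃ a, IsAtom a ∧ a ≤ u := by
  obtain ⟨c, hcS, hcu⟩ := hdom u le_rfl hu
  obtain ⟨m, hmc, hm⟩ := hS.exists_le_minimal hcS
  exact ⟨m, hm.isAtom_of_forall_exists_le hS_bot fun b hbm =>
    hdom b (hbm.le.trans (hmc.trans hcu)), hmc.trans hcu⟩

namespace Topology.IsUpper

variable {α : Type*}

lemma coreT_eq_Ici [Preorder α] [TopologicalSpace α] [IsUpper α] (u : α) :
    coreT ‹TopologicalSpace α› u = Ici u := by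
  ext y
  change (∀ O, IsOpen O → u ∈ O → y ∈ O) ↔ u ≤ y
  rw [← specializes_iff_forall_open, specializes_iff_mem_closure, closure_singleton, mem_Iic]

variable [BooleanAlgebra α] [TopologicalSpace α] [IsUpper α]

lemma _root_.IsAtom.isOpen_Ici {a : α} (ha : IsAtom a) : IsOpen (Ici a) := by
  have : Ici a = (Iic aᶜ)ᶜ := by
    ext z
    simp only [mem_Ici, mem_compl_iff, mem_Iic, le_compl_iff_disjoint_right, disjoint_comm,
      ← ha.not_le_iff_disjoint, not_not]
  exact this ▸ isClosed_Iic.isOpen_compl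

lemma exists_isAtom_le_of_Ici_mem_nhds {x u : α} (hx : Ici u ∈ 𝓝 x) (hu : u ≠ ⊥) :
    ∃ a, IsAtom a ∧ a ≤ u := by
  obtain ⟨_, ⟨t, ht, rfl⟩, hxt, htu⟩ := IsUpper.isTopologicalBasis.mem_nhds_iff.1 hx
  refine exists_isAtom_le_of_finite (ht.image compl) ?_ hu fun b hbu hb => ?_
  · rintro ⟨y, hyt, hy⟩
    exact hxt ⟨y, hyt, compl_eq_bot.1 hy ▸ le_top⟩
  · have : bᶜ ∈ lowerClosure t := by
      by_contra h
      exact hb (le_compl_self.1 (hbu.trans (htu h)))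
    obtain ⟨y, hyt, hby⟩ := this
    exact ⟨yᶜ, mem_image_of_mem _ hyt, compl_le_iff_compl_le.1 hby⟩

lemma exists_isOpen_Ici_subset [IsAtomic α] {x : α} {U : Set α} (hU : IsOpen U) (hx : x ∈ U) :
    ∃ u, IsOpen (Ici u) ∧ u ≤ x ∧ Ici u ⊆ U := by
  obtain ⟨_, ⟨t, ht, rfl⟩, hxt, htU⟩ := IsUpper.isTopologicalBasis.exists_subset_of_mem_open hx hU
  lift t to Finset α using ht
  have : ∀ y ∈ t, ∃ a, IsAtom a ∧ a ≤ x ⊓ yᶜ := fun y hy =>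
    (eq_bot_or_exists_atom_le _).resolve_left fun h =>
      hxt ⟨y, hy, disjoint_compl_right_iff.1 (disjoint_iff.2 h)⟩
  choose! a ha hax using this
  have hIci : Ici (t.sup a) = ⋂ y ∈ t, Ici (a y) := by
    ext z
    simp [Finset.sup_le_iff]
  refine ⟨t.sup a, hIci ▸ isOpen_biInter_finset fun y hy => (ha y hy).isOpen_Ici,
    Finset.sup_le fun y hy => (hax y hy).trans inf_le_left, fun z hz => htU ?_⟩
  rintro ⟨y, hy, hzy⟩
  have : a y ≤ y ⊓ yᶜ := le_inf (((Finset.le_sup hy).trans hz).trans hzy)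
    ((hax y hy).trans inf_le_right)
  exact (ha y hy).1 (le_bot_iff.1 (inf_compl_self y ▸ this))

theorem forall_exists_Ici_subset_iff_isAtomic :
    (∀ (x : α) (U : Set α), IsOpen U → x ∈ U →
      ∃ (u : α) (V : Set α), IsOpen V ∧ x ∈ V ∧ V ⊆ Ici u ∧ Ici u ⊆ U) ↔ IsAtomic α := by
  constructor
  · refine fun h => ⟨fun x => or_iff_not_imp_left.2 fun hx => ?_⟩
    obtain ⟨u, V, hV, hxV, hVu, huU⟩ :=
      h x (Iic ⊥)ᶜ isClosed_Iic.isOpen_compl (mt le_bot_iff.1 hx)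
    obtain ⟨a, ha, hau⟩ := exists_isAtom_le_of_Ici_mem_nhds
      (Filter.mem_of_superset (hV.mem_nhds hxV) hVu) fun hu => huU le_rfl hu.le
    exact ⟨a, ha, hau.trans (hVu hxV)⟩
  · intro _ x U hU hx
    obtain ⟨u, hu, hux, huU⟩ := exists_isOpen_Ici_subset hU hx
    exact ⟨u, Ici u, hu, hux, subset_rfl, huU⟩

end Topology.IsUpper

/-- For a complete Boolean algebra L, the weak upper space Υ L is
a C-space iff L is atomic. -/
theorem stmt_8 {L : Type*} [CompleteBooleanAlgebra L] :
    (∀ (x : L) (U : Set L), (upTop L).IsOpen U → x ∈ U →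
      ∃ (u : L) (V : Set L), (upTop L).IsOpen V ∧ x ∈ V ∧
        V ⊆ coreT (upTop L) u ∧ coreT (upTop L) u ⊆ U) ↔
    (∀ x : L, x ≠ ⊥ → ∃ a : L, IsAtom a ∧ a ≤ x) := by
  let _ : TopologicalSpace L := upTop L
  have : IsUpper L := ⟨upTop_eq_upper L⟩
  simp only [IsUpper.coreT_eq_Ici]
  exact IsUpper.forall_exists_Ici_subset_iff_isAtomic.trans <|
    (isAtomic_iff L).trans <| forall_congr' fun _ => or_iff_not_imp_left
end

section
/- In a C-space, the interior relation ρ is idempotent: x ρ z if and only if there exists y with x ρ y and y ρ z. -/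
/-- The interior relation of a space: x ρ y iff y ∈ int(↑x). -/
def rho {X : Type*} [TopologicalSpace X] (x y : X) : Prop := y ∈ interior (core x)

def IsCSpace (X : Type*) [TopologicalSpace X] : Prop :=
  ∀ (x : X) (U : Set X), IsOpen U → x ∈ U → ∃ u : X, x ∈ interior (core u) ∧ core u ⊆ U

section

variable {X : Type*} [TopologicalSpace X]

theorem mem_core_self (x : X) : x ∈ core x :=
  fun _ _ hx => hx

theorem core_subset_core {x y : X} (hy : y ∈ core x) : core y ⊆ core x :=
  fun _ hw U hU hx => hw U hU (hy U hU hx)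

theorem rho_trans {x y z : X} (hxy : rho x y) (hyz : rho y z) : rho x z :=
  interior_mono (core_subset_core (interior_subset hxy)) hyz

theorem IsCSpace.exists_rho_rho {x z : X} (hC : IsCSpace X) (hxz : rho x z) :
    ∃ y : X, rho x y ∧ rho y z := by
  obtain ⟨y, hzy, hy⟩ := hC z (interior (core x)) isOpen_interior hxz
  exact ⟨y, hy (mem_core_self y), hzy⟩

end

/-- In a C-space, the interior relation is idempotent. -/
theorem stmt_10 {X : Type*} [TopologicalSpace X]
    (hC : ∀ (x : X) (U : Set X), IsOpen U → x ∈ U →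
      ∃ u : X, x ∈ interior (core u) ∧ core u ⊆ U) :
    ∀ x z : X, rho x z ↔ ∃ y : X, rho x y ∧ rho y z :=
  fun _ _ => ⟨IsCSpace.exists_rho_rho hC, fun ⟨_, hxy, hyz⟩ => rho_trans hxy hyz⟩
end

section
/- For every continuous poset, the way-below relation is a C-order: it is idempotent (has the interpolation property), each set ≪y is an ideal with respect to the induced lower order, and ≪x = ≪y implies x = y. -/
variable {P : Type*} [PartialOrder P]

/-- An ideal of a poset: a nonempty, directed lower set. -/
def Idl (I : Set P) : Prop :=
  I.Nonempty ∧ (∀ a ∈ I, ∀ b, b ≤ a → b ∈ I) ∧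
    ∀ a ∈ I, ∀ b ∈ I, ∃ c ∈ I, a ≤ c ∧ b ≤ c

/-- The way-below relation: x ≪ y iff x belongs to every ideal possessing a
join above y. -/
def wb (x y : P) : Prop :=
  ∀ I : Set P, Idl I → ∀ s, IsLUB I s → y ≤ s → x ∈ I

/-- The lower quasi-order induced by the way-below relation. -/
def leWb (a b : P) : Prop := ∀ z, wb z a → wb z b

/-
Interpolation: for a continuous poset the set `{a | ∃ y, a ≪ y ≪ z}` is an ideal
with join `z`, so anything way below `z` already lies in it. The remaining
properties hold because `≪b` determines `b` as its join, so that the quasi-order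
`leWb` coincides with `≤`.
-/

lemma idl_Iic (y : P) : Idl (Set.Iic y) :=
  ⟨⟨y, le_rfl⟩, fun _ ha _ hb => hb.trans ha, fun _ ha _ hb => ⟨y, le_rfl, ha, hb⟩⟩

namespace wb

lemma le {x y : P} (h : wb x y) : x ≤ y :=
  h _ (idl_Iic y) y isLUB_Iic le_rfl

lemma mono_left {x x' y : P} (hx : x' ≤ x) (h : wb x y) : wb x' y :=
  fun I hI s hs hys => hI.2.1 x (h I hI s hs hys) x' hx

lemma mono_right {x y y' : P} (h : wb x y) (hy : y ≤ y') : wb x y' :=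
  fun I hI s hs hys => h I hI s hs (hy.trans hys)

lemma trans {x y z : P} (hxy : wb x y) (hyz : wb y z) : wb x z :=
  fun I hI s hs hzs => hxy I hI s hs (hs.1 (hyz I hI s hs hzs))

end wb

lemma leWb_of_le {a b : P} (h : a ≤ b) : leWb a b :=
  fun _ hz => hz.mono_right h

lemma le_of_leWb {a b : P} (ha : IsLUB {x | wb x a} a) (h : leWb a b) : a ≤ b :=
  ha.2 fun _ hz => (h _ hz).le

lemma eq_of_wb_set_eq {x y : P} (hx : IsLUB {z | wb z x} x) (hy : IsLUB {z | wb z y} y)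
    (h : {z | wb z x} = {z | wb z y}) : x = y :=
  hx.unique (h ▸ hy)

lemma idl_wb_wb
    (hcont : ∀ y : P, Idl {x | wb x y} ∧ IsLUB {x | wb x y} y) (z : P) :
    Idl {a | ∃ y, wb a y ∧ wb y z} := by
  refine ⟨?_, ?_, ?_⟩
  · obtain ⟨y, hy⟩ := (hcont z).1.1
    obtain ⟨a, ha⟩ := (hcont y).1.1
    exact ⟨a, y, ha, hy⟩
  · rintro a ⟨y, hay, hyz⟩ b hba
    exact ⟨y, hay.mono_left hba, hyz⟩
  · rintro a ⟨y₁, hay₁, hy₁z⟩ b ⟨y₂, hby₂, hy₂z⟩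
    obtain ⟨y, hyz, hy₁, hy₂⟩ := (hcont z).1.2.2 y₁ hy₁z y₂ hy₂z
    obtain ⟨c, hcy, hac, hbc⟩ :=
      (hcont y).1.2.2 a (hay₁.mono_right hy₁) b (hby₂.mono_right hy₂)
    exact ⟨c, ⟨y, hcy, hyz⟩, hac, hbc⟩

lemma isLUB_wb_wb
    (hcont : ∀ y : P, Idl {x | wb x y} ∧ IsLUB {x | wb x y} y) (z : P) :
    IsLUB {a | ∃ y, wb a y ∧ wb y z} z := by
  refine ⟨fun a ⟨y, hay, hyz⟩ => hay.le.trans hyz.le, fun u hu => ?_⟩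
  exact (hcont z).2.2 fun y hyz => (hcont y).2.2 fun a hay => hu ⟨y, hay, hyz⟩

lemma wb_iff_exists_wb_wb
    (hcont : ∀ y : P, Idl {x | wb x y} ∧ IsLUB {x | wb x y} y) {x z : P} :
    wb x z ↔ ∃ y, wb x y ∧ wb y z :=
  ⟨fun h => h _ (idl_wb_wb hcont z) z (isLUB_wb_wb hcont z) le_rfl,
    fun ⟨_, hxy, hyz⟩ => hxy.trans hyz⟩

/-- For a continuous poset, the way-below relation is a C-order:
idempotent (interpolation), each ≪y is an ideal w.r.t. the induced lower
quasi-order, and it is separating. -/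
theorem stmt_15
    (hcont : ∀ y : P, Idl {x | wb x y} ∧ IsLUB {x | wb x y} y) :
    (∀ x z : P, wb x z ↔ ∃ y, wb x y ∧ wb y z) ∧
    (∀ y : P,
      (∃ x, wb x y) ∧
      (∀ a, wb a y → ∀ b, leWb b a → wb b y) ∧
      (∀ a b, wb a y → wb b y → ∃ c, wb c y ∧ leWb a c ∧ leWb b c)) ∧
    (∀ x y : P, {z | wb z x} = {z | wb z y} → x = y) := by
  refine ⟨fun x z => wb_iff_exists_wb_wb hcont, fun y => ⟨(hcont y).1.1, ?_, ?_⟩,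
    fun x y => eq_of_wb_set_eq (hcont x).2 (hcont y).2⟩
  · intro a hay b hba
    exact hay.mono_left (le_of_leWb (hcont b).2 hba)
  · intro a b hay hby
    obtain ⟨c, hcy, hac, hbc⟩ := (hcont y).1.2.2 a hay b hby
    exact ⟨c, hcy, leWb_of_le hac, leWb_of_le hbc⟩
end

section
/- Let S = (X, ≤, T) be a semilattice-ordered topological space whose specialization order of T equals ≤, which is ↑-stable and locally filtered. Then the binary meet operation is jointly continuous, i.e., S is a topological semilattice. -/
/-!
Given an open `U ∋ x ⊓ y`, pick a filtered `D ⊆ U` with `x ⊓ y` in its interior. By ↑-stability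
the upper closure of `interior D` is an open neighbourhood of both `x` and `y`, and the upper closure
of a filtered set is closed under `⊓`; since open sets are upper sets, the meet of any two points of
that neighbourhood lies above an element of `D` and hence in `U`.
-/

open Topology

theorem DirectedOn.inf_mem_upperClosure {α : Type*} [SemilatticeInf α] {D : Set α}
    (hD : DirectedOn (· ≥ ·) D) {a b : α} (ha : a ∈ upperClosure D) (hb : b ∈ upperClosure D) :
    a ⊓ b ∈ upperClosure D := by
  obtain ⟨a', ha'D, ha'a⟩ := ha
  obtain ⟨b', hb'D, hb'b⟩ := hb
  obtain ⟨c, hcD, hca', hcb'⟩ := hD a' ha'D b' hb'D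
  exact ⟨c, hcD, le_inf (hca'.trans ha'a) (hcb'.trans hb'b)⟩

theorem upperClosure_mem_nhds_of_mem_interior {α : Type*} [Preorder α] [TopologicalSpace α]
    (hup : ∀ O : Set α, IsOpen O → IsOpen (upperClosure O : Set α)) {D : Set α} {x y : α}
    (hx : x ∈ interior D) (hxy : x ≤ y) : (upperClosure D : Set α) ∈ 𝓝 y :=
  Filter.mem_of_superset ((hup _ isOpen_interior).mem_nhds ⟨x, hx, hxy⟩)
    (upperClosure_min (interior_subset.trans subset_upperClosure) (upperClosure D).upper)

/-- A compatible, ↑-stable and locally filtered semilattice-ordered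
space is a topological semilattice: binary meet is jointly continuous. -/
theorem stmt_18 {X : Type*} [SemilatticeInf X] [TopologicalSpace X]
    (hcompat : ∀ x y : X, x ≤ y ↔ ∀ U : Set X, IsOpen U → x ∈ U → y ∈ U)
    (hup : ∀ O : Set X, IsOpen O → IsOpen {y | ∃ x ∈ O, x ≤ y})
    (hlf : ∀ (x : X) (U : Set X), IsOpen U → x ∈ U →
      ∃ D : Set X, x ∈ interior D ∧ D ⊆ U ∧
        ∀ a ∈ D, ∀ b ∈ D, ∃ c ∈ D, c ≤ a ∧ c ≤ b) :
    Continuous fun p : X × X => p.1 ⊓ p.2 := by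
  have hupper (U : Set X) (hU : IsOpen U) : IsUpperSet U :=
    fun x y hxy hx => (hcompat x y).1 hxy U hU hx
  refine continuous_iff_continuousAt.2 fun ⟨x, y⟩ => ?_
  refine (nhds_basis_opens (x ⊓ y)).tendsto_right_iff.2 fun U ⟨hxyU, hU⟩ => ?_
  obtain ⟨D, hxyD, hDU, hD⟩ := hlf (x ⊓ y) U hU hxyU
  have hx := upperClosure_mem_nhds_of_mem_interior hup hxyD inf_le_left
  have hy := upperClosure_mem_nhds_of_mem_interior hup hxyD inf_le_right
  filter_upwards [prod_mem_nhds hx hy] with ⟨a, b⟩ ⟨ha, hb⟩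
  exact upperClosure_min hDU (hupper U hU) (DirectedOn.inf_mem_upperClosure hD ha hb)
end
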